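/- arXiv:1704.01257 — 3 statements merged into one kernel-verified Lean document; each statement's English description precedes it below -/
import Mathlib

section
/- Let K > 0 and N > 0, and let Ψ : [0,∞) → ℝ be continuous on [0,∞) and twice differentiable on (0,∞), with Ψ'(t) < 0 for all t > 0, satisfying Ψ''(t) ≥ −2K·Ψ'(t) + (2/N)·Ψ'(t)² for all t > 0, and such that Ψ'(t) converges to a finite limit D₀ < 0 as t → 0⁺. Then for every t > 0: Ψ(0) − Ψ(t) ≤ (N/2)·log(1 − (1 − e^{−2Kt})·D₀/(K·N)). -/
open Set Filter Topology Real

/-!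
With `w = 1/Ψ' - 1/(KN)`, dividing the differential inequality by `Ψ'²` turns it into the linear
inequality `w' ≤ 2K w`, so Grönwall gives `w t ≤ e^{2Kt} w(0⁺)`. As `Ψ' < 0`, this says that `Ψ'`
lies above the solution of the Riccati equation `u' = -2K u + (2/N) u²`, `u 0 = D₀`, and the
right-hand side of the claim is minus the integral of that solution over `[0, t]`.
-/

lemma AntitoneOn.le_of_tendsto_nhdsGT {α β : Type*} [LinearOrder α] [TopologicalSpace α]
    [OrderTopology α] [DenselyOrdered α] [Preorder β] [TopologicalSpace β] [ClosedIciTopology β]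
    {f : α → β} {a t : α} {l : β} (hf : AntitoneOn f (Ioi a)) (hl : Tendsto f (𝓝[>] a) (𝓝 l))
    (ht : a < t) : f t ≤ l :=
  have : (𝓝[>] a).NeBot := nhdsGT_neBot_of_exists_gt ⟨t, ht⟩
  ge_of_tendsto hl <| by
    filter_upwards [Ioo_mem_nhdsGT ht] with s hs
    exact hf hs.1 ht hs.2.le

theorem le_exp_mul_of_hasDerivAt_le_mul {v v' : ℝ → ℝ} {a c v₀ : ℝ}
    (hv : ∀ s ∈ Ioi a, HasDerivAt v (v' s) s) (hle : ∀ s ∈ Ioi a, v' s ≤ c * v s)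
    (hlim : Tendsto v (𝓝[>] a) (𝓝 v₀)) {t : ℝ} (ht : a < t) :
    v t ≤ exp (c * (t - a)) * v₀ := by
  set φ : ℝ → ℝ := fun s => exp (-c * (s - a)) * v s
  have hφ : ∀ s ∈ Ioi a, HasDerivAt φ (exp (-c * (s - a)) * (v' s - c * v s)) s := by
    intro s hs
    refine ((((hasDerivAt_id s).sub_const a).const_mul (-c)).exp.mul (hv s hs)).congr_deriv ?_
    simp only [id_eq]
    ring
  have hanti : AntitoneOn φ (Ioi a) := by
    refine antitoneOn_of_hasDerivWithinAt_nonpos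
      (f' := fun s => exp (-c * (s - a)) * (v' s - c * v s)) (convex_Ioi a)
      (fun s hs => (hφ s hs).continuousAt.continuousWithinAt) ?_ ?_ <;> rw [interior_Ioi]
    · exact fun s hs => (hφ s hs).hasDerivWithinAt
    · exact fun s hs => mul_nonpos_of_nonneg_of_nonpos (exp_pos _).le (by linarith [hle s hs])
  have hφlim : Tendsto φ (𝓝[>] a) (𝓝 v₀) := by
    have hexp : Tendsto (fun s => exp (-c * (s - a))) (𝓝[>] a) (𝓝 1) := by
      have : Continuous fun s => exp (-c * (s - a)) := by fun_prop
      simpa using (this.tendsto a).mono_left nhdsWithin_le_nhds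
    simpa only [one_mul] using hexp.mul hlim
  have hφt : exp (-c * (t - a)) * v t ≤ v₀ := hanti.le_of_tendsto_nhdsGT hφlim ht
  calc v t = exp (c * (t - a)) * (exp (-c * (t - a)) * v t) := by
        rw [← mul_assoc, ← exp_add]; ring_nf; simp
    _ ≤ exp (c * (t - a)) * v₀ := by gcongr

theorem sub_le_sub_of_hasDerivAt_le {f g f' g' : ℝ → ℝ} {a b : ℝ} (hab : a ≤ b)
    (hf : ContinuousOn f (Icc a b)) (hg : ContinuousOn g (Icc a b))
    (hf' : ∀ t ∈ Ioo a b, HasDerivAt f (f' t) t) (hg' : ∀ t ∈ Ioo a b, HasDerivAt g (g' t) t)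
    (hle : ∀ t ∈ Ioo a b, f' t ≤ g' t) : f b - f a ≤ g b - g a := by
  have hmono : MonotoneOn (fun t => g t - f t) (Icc a b) := by
    refine monotoneOn_of_hasDerivWithinAt_nonneg (f' := fun t => g' t - f' t) (convex_Icc a b)
      (hg.sub hf) ?_ ?_ <;> rw [interior_Icc]
    · exact fun t ht => ((hg' t ht).sub (hf' t ht)).hasDerivWithinAt
    · exact fun t ht => sub_nonneg.2 (hle t ht)
  have := hmono (left_mem_Icc.2 hab) (right_mem_Icc.2 hab) hab
  simp only at this
  linarith

/-- The solution of `u' = -2K u + (2/N) u²`, `u 0 = D₀`: its reciprocal solves the linear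
equation `w' = 2K (w - 1/(KN))`. -/
noncomputable def riccatiSolution (K N D₀ t : ℝ) : ℝ :=
  (exp (2 * K * t) * (D₀⁻¹ - (K * N)⁻¹) + (K * N)⁻¹)⁻¹

theorem hasDerivAt_half_mul_log_eq_neg_riccatiSolution {K N D₀ t : ℝ} (hK : K ≠ 0) (hN : N ≠ 0)
    (hD₀ : D₀ ≠ 0) (hg : 1 - (1 - exp (-2 * K * t)) * D₀ / (K * N) ≠ 0) :
    HasDerivAt (fun s => N / 2 * log (1 - (1 - exp (-2 * K * s)) * D₀ / (K * N)))
      (-riccatiSolution K N D₀ t) t := by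
  refine ((((((((hasDerivAt_id' t).const_mul (-2 * K)).exp.const_sub 1).mul_const D₀).div_const
    (K * N)).const_sub 1).log hg).const_mul (N / 2)).congr_deriv ?_
  set E := exp (-2 * K * t)
  have hE : E ≠ 0 := (exp_pos _).ne'
  have hexp : exp (2 * K * t) = E⁻¹ := by rw [← exp_neg]; ring_nf
  have hρ : exp (2 * K * t) * (D₀⁻¹ - (K * N)⁻¹) + (K * N)⁻¹
      = (1 - (1 - E) * D₀ / (K * N)) / (E * D₀) := by
    rw [hexp]; field_simp; ring
  rw [riccatiSolution, hρ, inv_div]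
  field_simp

theorem inv_sub_le_of_riccati {K N D₀ : ℝ} {u u' : ℝ → ℝ} (hK : K ≠ 0) (hD₀ : D₀ ≠ 0)
    (hu : ∀ s ∈ Ioi 0, HasDerivAt u (u' s) s) (hu₀ : ∀ s ∈ Ioi (0 : ℝ), u s ≠ 0)
    (hineq : ∀ s ∈ Ioi 0, -2 * K * u s + (2 / N) * u s ^ 2 ≤ u' s)
    (hlim : Tendsto u (𝓝[>] 0) (𝓝 D₀)) {t : ℝ} (ht : 0 < t) :
    (u t)⁻¹ - (K * N)⁻¹ ≤ exp (2 * K * t) * (D₀⁻¹ - (K * N)⁻¹) := by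
  have hderiv : ∀ s ∈ Ioi (0 : ℝ),
      HasDerivAt (fun s => (u s)⁻¹ - (K * N)⁻¹) (-u' s / u s ^ 2) s :=
    fun s hs => ((hu s hs).inv (hu₀ s hs)).sub_const _
  have hle : ∀ s ∈ Ioi (0 : ℝ), -u' s / u s ^ 2 ≤ 2 * K * ((u s)⁻¹ - (K * N)⁻¹) := by
    intro s hs
    have hsq : 0 < u s ^ 2 := by positivity [hu₀ s hs]
    have hexpand :
        2 * K * ((u s)⁻¹ - (K * N)⁻¹) * u s ^ 2 = 2 * K * u s - (2 / N) * u s ^ 2 := by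
      field_simp [hu₀ s hs]
    rw [div_le_iff₀ hsq, hexpand]
    linarith [hineq s hs]
  simpa using le_exp_mul_of_hasDerivAt_le_mul hderiv hle ((hlim.inv₀ hD₀).sub_const _) ht

theorem riccatiSolution_le {K N D₀ : ℝ} {u u' : ℝ → ℝ} (hK : 0 < K) (hN : 0 < N) (hD₀ : D₀ < 0)
    (hu : ∀ s ∈ Ioi 0, HasDerivAt u (u' s) s) (hneg : ∀ s ∈ Ioi (0 : ℝ), u s < 0)
    (hineq : ∀ s ∈ Ioi 0, -2 * K * u s + (2 / N) * u s ^ 2 ≤ u' s)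
    (hlim : Tendsto u (𝓝[>] 0) (𝓝 D₀)) {t : ℝ} (ht : 0 < t) :
    riccatiSolution K N D₀ t ≤ u t := by
  have hbound := inv_sub_le_of_riccati hK.ne' hD₀.ne hu (fun s hs => (hneg s hs).ne) hineq hlim ht
  have hρ : exp (2 * K * t) * (D₀⁻¹ - (K * N)⁻¹) + (K * N)⁻¹ < 0 := by
    have : 1 < exp (2 * K * t) := one_lt_exp_iff.2 (by positivity)
    have : D₀⁻¹ < 0 := inv_neg''.2 hD₀
    have : 0 < (K * N)⁻¹ := by positivity
    nlinarith
  rw [riccatiSolution, inv_le_of_neg hρ (hneg t ht)]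
  linarith

/-- The integrated differential inequality from the paper's proof of the logarithmic
entropy-energy inequality (Proposition 6.1): if `Ψ` is continuous on `[0,∞)`, twice
differentiable on `(0,∞)` with `Ψ' < 0` and `Ψ'' ≥ −2K·Ψ' + (2/N)·(Ψ')²` there, and
`Ψ'(t) → D₀ < 0` as `t → 0⁺`, then for every `t > 0`,
`Ψ(0) − Ψ(t) ≤ (N/2)·log(1 − (1 − e^{−2Kt})·D₀/(KN))`. -/
theorem entropy_energy_integrated_inequality
    (K N D₀ : ℝ) (hK : 0 < K) (hN : 0 < N) (hD₀ : D₀ < 0) (Ψ Ψ' Ψ'' : ℝ → ℝ)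
    (hΨcont : ContinuousOn Ψ (Ici 0))
    (hΨ' : ∀ t ∈ Ioi (0 : ℝ), HasDerivAt Ψ (Ψ' t) t)
    (hΨ'' : ∀ t ∈ Ioi (0 : ℝ), HasDerivAt Ψ' (Ψ'' t) t)
    (hneg : ∀ t ∈ Ioi (0 : ℝ), Ψ' t < 0)
    (hineq : ∀ t ∈ Ioi (0 : ℝ), -2 * K * Ψ' t + (2 / N) * (Ψ' t) ^ 2 ≤ Ψ'' t)
    (hlim : Tendsto Ψ' (nhdsWithin 0 (Ioi 0)) (nhds D₀)) :
    ∀ t ∈ Ioi (0 : ℝ),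
      Ψ 0 - Ψ t ≤ (N / 2) * Real.log (1 - (1 - Real.exp (-2 * K * t)) * D₀ / (K * N)) := by
  intro t ht
  set F : ℝ → ℝ := fun s => N / 2 * log (1 - (1 - exp (-2 * K * s)) * D₀ / (K * N))
  have hF : ∀ s ∈ Ici (0 : ℝ), HasDerivAt F (-riccatiSolution K N D₀ s) s := by
    intro s hs
    refine hasDerivAt_half_mul_log_eq_neg_riccatiSolution hK.ne' hN.ne' hD₀.ne (ne_of_gt ?_)
    have : exp (-2 * K * s) ≤ 1 := exp_le_one_iff.2 (by nlinarith [mem_Ici.1 hs])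
    have : (1 - exp (-2 * K * s)) * D₀ / (K * N) ≤ 0 :=
      div_nonpos_of_nonpos_of_nonneg (mul_nonpos_of_nonneg_of_nonpos (by linarith) hD₀.le)
        (by positivity)
    linarith
  have hcomp : -F t - -F 0 ≤ Ψ t - Ψ 0 := sub_le_sub_of_hasDerivAt_le ht.le
    (fun s hs => (hF s hs.1).neg.continuousAt.continuousWithinAt)
    (hΨcont.mono Icc_subset_Ici_self) (fun s hs => (hF s (mem_Ici.2 hs.1.le)).neg)
    (fun s hs => hΨ' s hs.1)
    (fun s hs => by simpa using riccatiSolution_le hK hN hD₀ hΨ'' hneg hineq hlim hs.1)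
  have hF0 : F 0 = 0 := by simp [F]
  show Ψ 0 - Ψ t ≤ F t
  linarith
end

section
/- Let N ≥ 2 be a real number and let p ∈ [1, 2(N+1)/N]. Then there exist real numbers a ≥ 0 and b ≥ 0 satisfying the two equations: p − 1 − b/2 = (3b − 2(N+2)a)/(2(N−1)) and (p−2)(b−1) = ((a−b)² − N·a²)/(N−1). -/
open Set

/-!
The first equation is linear in `a` and `b` and forces `b = 2 (a + (N-1)(p-1)/(N+2))`.
Substituting this, the second equation becomes `(a - m)² = D / (N+2)²` with
`m = (2N + 2 - Np)/(N+2)` and `D = N (p-1) (2N - (N-2) p)`. For `1 ≤ p ≤ 2(N+1)/N` both `m`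
and `D` are nonnegative, so the larger root `a = m + √D/(N+2)` is nonnegative, and so is
`b ≥ 2a`.
-/

section SobolevExponent

variable {N p a b : ℝ}

theorem sobolev_first_equation (hN1 : N - 1 ≠ 0) (hN2 : N + 2 ≠ 0)
    (hb : b = 2 * (a + (N - 1) * (p - 1) / (N + 2))) :
    p - 1 - b / 2 = (3 * b - 2 * (N + 2) * a) / (2 * (N - 1)) := by
  subst hb
  field_simp
  ring

theorem sobolev_second_equation_iff (hN1 : N - 1 ≠ 0) (hN2 : N + 2 ≠ 0)
    (hb : b = 2 * (a + (N - 1) * (p - 1) / (N + 2))) :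
    (p - 2) * (b - 1) = ((a - b) ^ 2 - N * a ^ 2) / (N - 1) ↔
      (a - (2 * N + 2 - N * p) / (N + 2)) ^ 2 =
        N * (p - 1) * (2 * N - (N - 2) * p) / (N + 2) ^ 2 := by
  have key : (N - 1) * ((p - 2) * (b - 1)) - ((a - b) ^ 2 - N * a ^ 2) =
      (N - 1) * ((a - (2 * N + 2 - N * p) / (N + 2)) ^ 2 -
        N * (p - 1) * (2 * N - (N - 2) * p) / (N + 2) ^ 2) := by
    subst hb
    field_simp
    ring
  rw [eq_div_iff hN1, ← sub_eq_zero, ← sub_eq_zero (a := (_ - _) ^ 2), mul_comm, key,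
    mul_eq_zero, or_iff_right hN1]

theorem sobolev_discriminant_nonneg (hN : 0 ≤ N) (hp1 : 1 ≤ p) (hNp : N * p ≤ 2 * (N + 1)) :
    0 ≤ N * (p - 1) * (2 * N - (N - 2) * p) :=
  mul_nonneg (mul_nonneg hN (by linarith)) (by linarith)

end SobolevExponent

/-- The algebraic solvability claim in the paper's proof of the sharp Sobolev
inequality (Theorem 5.8): for `N ≥ 2` and `p ∈ [1, 2(N+1)/N]` there exist `a, b ≥ 0`
with `p − 1 − b/2 = (3b − 2(N+2)a)/(2(N−1))` and
`(p−2)(b−1) = ((a−b)² − Na²)/(N−1)`. -/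
theorem sobolev_exponent_system_solvable
    (N : ℝ) (hN : 2 ≤ N) (p : ℝ) (hp : p ∈ Icc (1 : ℝ) (2 * (N + 1) / N)) :
    ∃ a b : ℝ, 0 ≤ a ∧ 0 ≤ b ∧
      p - 1 - b / 2 = (3 * b - 2 * (N + 2) * a) / (2 * (N - 1)) ∧
      (p - 2) * (b - 1) = ((a - b) ^ 2 - N * a ^ 2) / (N - 1) := by
  obtain ⟨hp1, hp2⟩ := hp
  have hN1 : N - 1 ≠ 0 := by linarith
  have hN2 : 0 < N + 2 := by linarith
  have hNp : N * p ≤ 2 * (N + 1) := by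
    rwa [le_div_iff₀ (by linarith), mul_comm] at hp2
  have hD := sobolev_discriminant_nonneg (by linarith) hp1 hNp
  set a := (2 * N + 2 - N * p) / (N + 2) + √(N * (p - 1) * (2 * N - (N - 2) * p)) / (N + 2)
  have ha : 0 ≤ a := add_nonneg (div_nonneg (by linarith) hN2.le) (by positivity)
  refine ⟨a, 2 * (a + (N - 1) * (p - 1) / (N + 2)), ha, ?_,
    sobolev_first_equation hN1 hN2.ne' rfl, (sobolev_second_equation_iff hN1 hN2.ne' rfl).2 ?_⟩
  · have hc : 0 ≤ (N - 1) * (p - 1) / (N + 2) :=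
      div_nonneg (mul_nonneg (by linarith) (by linarith)) hN2.le
    exact mul_nonneg zero_le_two (add_nonneg ha hc)
  · rw [add_sub_cancel_left, div_pow, Real.sq_sqrt hD]
end

section
/- Let N ≥ 2 be a real number and let p ∈ [1, (7N² + 2N + (N+2)·√(N² + 8N))/(4N(N−1))]. Then there exist real numbers a ≥ 0 and b ≥ 0 satisfying the two equations: p − 1 − b/2 = (3b − 2(N+2)a)/(2(N−1)) and (p−2)(b−1) = ((a−b)² − N·a²)/(N−1). In particular, the admissible range of exponents in the Finsler Sobolev inequality extends from [1, 2(N+1)/N] to [1, (7N² + 2N + (N+2)·√(N² + 8N))/(4N(N−1))], which is still strictly contained in [1, 2N/(N−2)] for N > 2. -/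
/-!
With `t = p - 1`, the first equation is linear and forces `b = 2a + 2(N-1)t/(N+2)`; the
second then becomes a quadratic equation in `a`, solved by
`a = (N + 2 - N t + r)/(N + 2)` with `r = √(N t (N + 2 - (N - 2) t))`. Since
`N t (N + 2 - (N - 2) t) = (N t - (N + 2))² - Q(t)` for
`Q(t) = 2N(N-1)t² - 3N(N+2)t + (N+2)²` (`sobolevQuad`), this root is nonnegative as soon as
`N t ≤ N + 2` or `Q(t) ≤ 0`. As `Q((N+2)/N) < 0`, convexity gives `Q ≤ 0` from `(N+2)/N`
up to its larger root `t₊ = (N+2)(3N + √(N² + 8N))/(4N(N-1))` (`sobolevRoot`), so every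
`p ∈ [1, 1 + t₊]` works. Both comparisons of ranges reduce to `(N+2)/N ≤ t₊ < (N+2)/(N-2)`,
the second one being `(N-2)²(N² + 8N) < N²(N+2)²`, i.e. `1 < N`.
-/

open Set Real

def SobolevSystem (N p a b : ℝ) : Prop :=
  p - 1 - b / 2 = (3 * b - 2 * (N + 2) * a) / (2 * (N - 1)) ∧
    (p - 2) * (b - 1) = ((a - b) ^ 2 - N * a ^ 2) / (N - 1)

def sobolevQuad (N t : ℝ) : ℝ := 2 * N * (N - 1) * t ^ 2 - 3 * N * (N + 2) * t + (N + 2) ^ 2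

def sobolevRadicand (N t : ℝ) : ℝ := N * t * (N + 2 - (N - 2) * t)

noncomputable def sobolevRoot (N : ℝ) : ℝ :=
  (N + 2) * (3 * N + √(N ^ 2 + 8 * N)) / (4 * N * (N - 1))

theorem quadratic_nonpos_of_mem_Icc {a b c x y t : ℝ} (ha : 0 ≤ a) (ht : t ∈ Icc x y)
    (hx : a * x ^ 2 + b * x + c ≤ 0) (hy : a * y ^ 2 + b * y + c ≤ 0) :
    a * t ^ 2 + b * t + c ≤ 0 := by
  obtain ⟨hxt, hty⟩ := ht
  rcases hxt.eq_or_lt with rfl | hxt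
  · exact hx
  have hxy : 0 < y - x := by linarith
  have hinterp : (y - x) * (a * t ^ 2 + b * t + c) =
      (y - t) * (a * x ^ 2 + b * x + c) + (t - x) * (a * y ^ 2 + b * y + c)
        - a * (y - x) * (t - x) * (y - t) := by ring
  have hcurv : 0 ≤ a * (y - x) * (t - x) * (y - t) :=
    mul_nonneg (mul_nonneg (mul_nonneg ha hxy.le) (sub_nonneg.2 hxt.le)) (sub_nonneg.2 hty)
  refine nonpos_of_mul_nonpos_right ?_ hxy
  rw [hinterp]
  linarith [mul_nonpos_of_nonneg_of_nonpos (sub_nonneg.2 hty) hx,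
    mul_nonpos_of_nonneg_of_nonpos (sub_nonneg.2 hxt.le) hy]

section

variable {N t : ℝ}

theorem sq_sqrt_sq_add_eight_mul (hN : 0 ≤ N) : √(N ^ 2 + 8 * N) ^ 2 = N ^ 2 + 8 * N :=
  sq_sqrt (by positivity)

theorem one_add_sobolevRoot (hN : 1 < N) :
    1 + sobolevRoot N =
      (7 * N ^ 2 + 2 * N + (N + 2) * √(N ^ 2 + 8 * N)) / (4 * N * (N - 1)) := by
  have hN0 : N ≠ 0 := by positivity
  have hN1 : N - 1 ≠ 0 := by linarith
  rw [sobolevRoot]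
  field_simp
  ring

theorem sobolevQuad_sobolevRoot (hN : 1 < N) : sobolevQuad N (sobolevRoot N) = 0 := by
  have hN0 : N ≠ 0 := by positivity
  have hN1 : N - 1 ≠ 0 := by linarith
  have hs := sq_sqrt_sq_add_eight_mul (by linarith : 0 ≤ N)
  rw [sobolevQuad, sobolevRoot]
  generalize √(N ^ 2 + 8 * N) = s at hs ⊢
  field_simp
  linear_combination 2 * (N + 2) ^ 2 * hs

theorem div_le_sobolevRoot (hN : 1 < N) : (N + 2) / N ≤ sobolevRoot N := by
  have hs : N ≤ √(N ^ 2 + 8 * N) := le_sqrt_of_sq_le (by nlinarith)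
  rw [sobolevRoot, div_le_div_iff₀ (by positivity) (by nlinarith)]
  nlinarith

theorem sub_two_mul_sobolevRoot_lt (hN : 1 < N) : (N - 2) * sobolevRoot N < N + 2 := by
  have hs := sq_sqrt_sq_add_eight_mul (by linarith : 0 ≤ N)
  have hs0 := sqrt_nonneg (N ^ 2 + 8 * N)
  have hs_lt : (N - 2) * √(N ^ 2 + 8 * N) < N * (N + 2) := by nlinarith
  rw [sobolevRoot, mul_div_assoc', div_lt_iff₀ (by nlinarith)]
  nlinarith

theorem sobolevQuad_nonpos (hN : 1 < N) (ht : t ∈ Icc ((N + 2) / N) (sobolevRoot N)) :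
    sobolevQuad N t ≤ 0 := by
  have hN0 : 0 < N := by linarith
  have hQ (x : ℝ) : sobolevQuad N x =
      2 * N * (N - 1) * x ^ 2 + -(3 * N * (N + 2)) * x + (N + 2) ^ 2 := by
    rw [sobolevQuad]; ring
  have hleft : sobolevQuad N ((N + 2) / N) = -(2 * (N + 2) ^ 2 / N) := by
    rw [sobolevQuad]
    field_simp
    ring
  have hright := sobolevQuad_sobolevRoot hN
  rw [hQ] at hleft hright ⊢
  exact quadratic_nonpos_of_mem_Icc (by nlinarith) ht (hleft ▸ neg_nonpos.2 (by positivity))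
    hright.le

theorem sobolevRadicand_eq_sq_sub_sobolevQuad (N t : ℝ) :
    sobolevRadicand N t = (N * t - (N + 2)) ^ 2 - sobolevQuad N t := by
  rw [sobolevRadicand, sobolevQuad]
  ring

theorem sobolevRadicand_nonneg (hN : 1 < N) (ht0 : 0 ≤ t) (ht : t ≤ sobolevRoot N) :
    0 ≤ sobolevRadicand N t := by
  have hlin : (N - 2) * t ≤ N + 2 := by
    rcases le_or_gt N 2 with h | h
    · nlinarith
    · nlinarith [sub_two_mul_sobolevRoot_lt hN]
  have hNt : 0 ≤ N * t := by nlinarith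
  rw [sobolevRadicand]
  nlinarith

theorem sub_le_sqrt_sobolevRadicand (hN : 1 < N) (ht : t ≤ sobolevRoot N) :
    N * t - (N + 2) ≤ √(sobolevRadicand N t) := by
  rcases le_or_gt (N * t) (N + 2) with h | h
  · exact (sub_nonpos.2 h).trans (sqrt_nonneg _)
  have hQ : sobolevQuad N t ≤ 0 :=
    sobolevQuad_nonpos hN ⟨(div_le_iff₀' (by linarith)).2 h.le, ht⟩
  refine le_sqrt_of_sq_le ?_
  linarith [sobolevRadicand_eq_sq_sub_sobolevQuad N t]

theorem sobolevSystem_of_sq_eq {r : ℝ} (hN : N ≠ 1) (hN' : N + 2 ≠ 0)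
    (hr : r ^ 2 = sobolevRadicand N t) :
    SobolevSystem N (1 + t) ((N + 2 + r - N * t) / (N + 2)) (2 * (N + 2 + r - t) / (N + 2)) := by
  have hN1 : N - 1 ≠ 0 := sub_ne_zero.2 hN
  rw [sobolevRadicand] at hr
  constructor
  · field_simp
    ring
  · rw [eq_div_iff hN1]
    field_simp
    linear_combination (N - 1) * hr

theorem exists_nonneg_sobolevSystem (hN : 1 < N) (ht0 : 0 ≤ t) (ht : t ≤ sobolevRoot N) :
    ∃ a b, 0 ≤ a ∧ 0 ≤ b ∧ SobolevSystem N (1 + t) a b := by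
  have hN2 : 0 < N + 2 := by linarith
  have hr := sub_le_sqrt_sobolevRadicand hN ht
  refine ⟨_, _, div_nonneg (by linarith) hN2.le, div_nonneg (by nlinarith) hN2.le,
    sobolevSystem_of_sq_eq hN.ne' hN2.ne' (sq_sqrt (sobolevRadicand_nonneg hN ht0 ht))⟩

end

/-- The extended-range claim of the paper's Remark 5.10: for `N ≥ 2` and
`p ∈ [1, (7N² + 2N + (N+2)√(N² + 8N))/(4N(N−1))]` there exist `a, b ≥ 0` solving the
system from the proof of the sharp Sobolev inequality; moreover this extended range
contains `[1, 2(N+1)/N]` and is still strictly contained in `[1, 2N/(N−2)]` for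
`N > 2`. -/
theorem sobolev_exponent_system_solvable_extended
    (N : ℝ) (hN : 2 ≤ N) (p : ℝ)
    (hp : p ∈ Icc (1 : ℝ)
      ((7 * N ^ 2 + 2 * N + (N + 2) * Real.sqrt (N ^ 2 + 8 * N)) / (4 * N * (N - 1)))) :
    (∃ a b : ℝ, 0 ≤ a ∧ 0 ≤ b ∧
      p - 1 - b / 2 = (3 * b - 2 * (N + 2) * a) / (2 * (N - 1)) ∧
      (p - 2) * (b - 1) = ((a - b) ^ 2 - N * a ^ 2) / (N - 1)) ∧
    2 * (N + 1) / N ≤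
      (7 * N ^ 2 + 2 * N + (N + 2) * Real.sqrt (N ^ 2 + 8 * N)) / (4 * N * (N - 1)) ∧
    (2 < N →
      (7 * N ^ 2 + 2 * N + (N + 2) * Real.sqrt (N ^ 2 + 8 * N)) / (4 * N * (N - 1)) <
        2 * N / (N - 2)) := by
  have hN1 : 1 < N := by linarith
  rw [← one_add_sobolevRoot hN1] at hp ⊢
  refine ⟨?_, ?_, fun hN2 => ?_⟩
  · obtain ⟨t, rfl⟩ : ∃ t, p = 1 + t := ⟨p - 1, by ring⟩
    exact exists_nonneg_sobolevSystem hN1 (by linarith [hp.1]) (by linarith [hp.2])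
  · have : 2 * (N + 1) / N = 1 + (N + 2) / N := by field_simp; ring
    linarith [div_le_sobolevRoot hN1]
  · have : 2 * N / (N - 2) = 1 + (N + 2) / (N - 2) := by
      have : N - 2 ≠ 0 := by linarith
      field_simp
      ring
    rw [this, add_lt_add_iff_left, lt_div_iff₀ (by linarith), mul_comm]
    exact sub_two_mul_sobolevRoot_lt hN1
end
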